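/- For all (u_1,u_2,u_3) with u_1,u_2 ∈ (0,1) and u_3 ∈ [0,1], the mixed second partial derivative of the three-dimensional vine copula C with respect to u_1 and u_2 satisfies ∂²C(u_1,u_2,u_3)/∂u_1∂u_2 = ∂₁C_{13;2}( C_{1|2}(u_1|u_2), C_{3|2}(u_3|u_2) ) · c_{12}(u_1,u_2). -/

import Mathlib

/-!
Write `h(v₁, v₂) = ∫₀^{u₃} c(v₁, v₂, v₃) dv₃` for the marginal of the vine density `c`, so that
`C(u₁, u₂, u₃) = ∫₀^{u₁} ∫₀^{u₂} h`. Since `h` is continuous on the unit square, Fubini and the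
fundamental theorem of calculus give `∂²C/∂u₁∂u₂ = h(u₁, u₂)`. There the factor `c₁₂(u₁, u₂)`
comes out of the integral, and with `x = C_{1|2}(u₁|u₂)` the remaining integrand
`c₂₃(u₂, v₃) c₁₃;₂(x, C_{3|2}(v₃|u₂))` is, by the chain rule and the symmetry of second
derivatives, the `v₃`-derivative of `∂₁C₁₃;₂(x, C_{3|2}(v₃|u₂))`. The boundary term at `v₃ = 0`
vanishes: `C_{3|2}(0|u₂) = 0` and `∂₁C₁₃;₂(x, 0) = 0` because the copulas vanish on `{t = 0}`.
-/

noncomputable section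

/-- The density of a bivariate copula: the mixed second partial derivative `∂²C/∂s∂t`. -/
def copDens (C : ℝ × ℝ → ℝ) (s t : ℝ) : ℝ :=
  deriv (fun a => deriv (fun b => C (a, b)) t) s

/-- The conditional distribution function `C_{1|2}(u₁|u₂) = ∂C₁₂(u₁,u₂)/∂u₂`. -/
def cond12 (C12 : ℝ × ℝ → ℝ) (u1 u2 : ℝ) : ℝ :=
  deriv (fun b => C12 (u1, b)) u2

/-- The conditional distribution function `C_{3|2}(u₃|u₂) = ∂C₂₃(u₂,u₃)/∂u₂`. -/
def cond32 (C23 : ℝ × ℝ → ℝ) (u3 u2 : ℝ) : ℝ :=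
  deriv (fun a => C23 (a, u3)) u2

/-- `∂₁C(x,y) = ∂C(x,y)/∂x`. -/
def pdFst (C : ℝ × ℝ → ℝ) (x y : ℝ) : ℝ := deriv (fun a => C (a, y)) x

/-- `∂₃C(x,y) = ∂C(x,y)/∂y` (derivative in the second argument). -/
def pdSnd (C : ℝ × ℝ → ℝ) (x y : ℝ) : ℝ := deriv (fun b => C (x, b)) y

/-- The three-dimensional vine copula built from the pair copulas `C₁₂, C₂₃, C₁₃;₂`:
`C(u₁,u₂,u₃) = ∫₀^{u₁}∫₀^{u₂}∫₀^{u₃} c₁₂(v₁,v₂) c₂₃(v₂,v₃)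
  c₁₃;₂(C_{1|2}(v₁|v₂), C_{3|2}(v₃|v₂)) dv₃ dv₂ dv₁`. -/
def vine (C12 C23 C132 : ℝ × ℝ → ℝ) (u1 u2 u3 : ℝ) : ℝ :=
  ∫ v1 in (0:ℝ)..u1, ∫ v2 in (0:ℝ)..u2, ∫ v3 in (0:ℝ)..u3,
    copDens C12 v1 v2 * copDens C23 v2 v3 *
      copDens C132 (cond12 C12 v1 v2) (cond32 C23 v3 v2)

open Set Function Filter Topology MeasureTheory intervalIntegral

section Integrals

variable {E : Type*} [NormedAddCommGroup E] [NormedSpace ℝ E]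

theorem continuousOn_intervalIntegral_of_continuousOn {X : Type*} [TopologicalSpace X]
    {F : X → ℝ → E} {K : Set X} {a b : ℝ} (hF : ContinuousOn (uncurry F) (K ×ˢ uIcc a b)) :
    ContinuousOn (fun x => ∫ t in a..b, F x t) K := by
  let c : ℝ → ℝ := fun t => projIcc (a ⊓ b) (a ⊔ b) inf_le_sup t
  have hc : Continuous (uncurry fun (x : K) t => F x (c t)) :=
    hF.comp_continuous (f := fun p : K × ℝ => (p.1.1, c p.2)) (by fun_prop)
      fun p => ⟨p.1.2, (projIcc _ _ inf_le_sup p.2).2⟩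
  rw [continuousOn_iff_continuous_domRestrict]
  refine (continuous_parametric_intervalIntegral_of_continuous' hc a b).congr fun x =>
    integral_congr fun t ht => ?_
  simp [c, projIcc_of_mem _ ht]

variable [CompleteSpace E]

theorem deriv_deriv_intervalIntegral_intervalIntegral {f : ℝ → ℝ → E}
    (hf : Continuous (uncurry f)) (a b : ℝ) :
    deriv (fun x => deriv (fun y => ∫ v in 0..x, ∫ w in 0..y, f v w) b) a = f a b := by
  have hswap : ∀ x y, ∫ v in 0..x, ∫ w in 0..y, f v w = ∫ w in 0..y, ∫ v in 0..x, f v w :=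
    fun x y => intervalIntegral_intervalIntegral_swap
      ((hf.continuousOn.integrableOn_compact (isCompact_uIcc.prod isCompact_uIcc)).mono_set
        (prod_mono uIoc_subset_uIcc uIoc_subset_uIcc))
  have hinner : ∀ x, deriv (fun y => ∫ w in 0..y, ∫ v in 0..x, f v w) b = ∫ v in 0..x, f v b :=
    fun x => Continuous.deriv_integral (fun w => ∫ v in 0..x, f v w)
      (continuous_parametric_intervalIntegral_of_continuous' (f := fun w v => f v w)
        (hf.comp continuous_swap) 0 x) 0 b
  simp_rw [hswap, hinner]
  exact Continuous.deriv_integral _ (hf.uncurry_right b) 0 a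

theorem deriv_deriv_intervalIntegral_intervalIntegral_of_continuousOn {f : ℝ → ℝ → E}
    (hf : ContinuousOn (uncurry f) (Icc 0 1 ×ˢ Icc 0 1)) {a b : ℝ} (ha : a ∈ Ioo 0 1)
    (hb : b ∈ Ioo 0 1) :
    deriv (fun x => deriv (fun y => ∫ v in 0..x, ∫ w in 0..y, f v w) b) a = f a b := by
  -- clamping to the unit square extends `f` continuously without changing the integrals
  let c : ℝ → ℝ := fun t => projIcc 0 1 zero_le_one t
  have hc : ∀ {t}, t ∈ Icc (0 : ℝ) 1 → c t = t := fun ht => by simp [c, projIcc_of_mem _ ht]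
  have hg : Continuous (uncurry fun v w => f (c v) (c w)) :=
    hf.comp_continuous (f := fun p : ℝ × ℝ => (c p.1, c p.2)) (by fun_prop)
      fun p => ⟨(projIcc _ _ zero_le_one p.1).2, (projIcc _ _ zero_le_one p.2).2⟩
  have huIcc : ∀ {x}, x ∈ Icc (0 : ℝ) 1 → uIcc 0 x ⊆ Icc 0 1 := fun hx =>
    uIcc_subset_Icc (left_mem_Icc.2 zero_le_one) hx
  have hclamp : ∀ {x y}, x ∈ Icc (0 : ℝ) 1 → y ∈ Icc (0 : ℝ) 1 →
      ∫ v in 0..x, ∫ w in 0..y, f v w = ∫ v in 0..x, ∫ w in 0..y, f (c v) (c w) :=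
    fun hx hy => integral_congr fun v hv => integral_congr fun w hw => by
      simp only [hc (huIcc hx hv), hc (huIcc hy hw)]
  have hnear : ∀ {z : ℝ}, z ∈ Ioo 0 1 → ∀ᶠ t in 𝓝 z, t ∈ Icc (0 : ℝ) 1 := fun hz =>
    mem_of_superset (Ioo_mem_nhds hz.1 hz.2) Ioo_subset_Icc_self
  have hderiv : (fun x => deriv (fun y => ∫ v in 0..x, ∫ w in 0..y, f v w) b) =ᶠ[𝓝 a]
      fun x => deriv (fun y => ∫ v in 0..x, ∫ w in 0..y, f (c v) (c w)) b := by
    filter_upwards [hnear ha] with x hx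
    exact EventuallyEq.deriv_eq (by filter_upwards [hnear hb] with y hy using hclamp hx hy)
  rw [hderiv.deriv_eq, deriv_deriv_intervalIntegral_intervalIntegral hg,
    hc (Ioo_subset_Icc_self ha), hc (Ioo_subset_Icc_self hb)]

end Integrals

section PartialDerivatives

theorem HasFDerivAt.hasDerivAt_comp_mk_left {g : ℝ × ℝ → ℝ} {φ : ℝ × ℝ →L[ℝ] ℝ} {s t : ℝ}
    (hg : HasFDerivAt g φ (s, t)) : HasDerivAt (fun a => g (a, t)) (φ (1, 0)) s :=
  hg.comp_hasDerivAt s ((hasDerivAt_id s).prodMk (hasDerivAt_const s t))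

theorem HasFDerivAt.hasDerivAt_comp_mk_right {g : ℝ × ℝ → ℝ} {φ : ℝ × ℝ →L[ℝ] ℝ} {s t : ℝ}
    (hg : HasFDerivAt g φ (s, t)) : HasDerivAt (fun b => g (s, b)) (φ (0, 1)) t :=
  hg.comp_hasDerivAt t ((hasDerivAt_const t s).prodMk (hasDerivAt_id t))

variable {f : ℝ × ℝ → ℝ} {U : Set (ℝ × ℝ)} {x y : ℝ}

theorem pdFst_eq_fderiv (hf : DifferentiableAt ℝ f (x, y)) :
    pdFst f x y = fderiv ℝ f (x, y) (1, 0) :=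
  hf.hasFDerivAt.hasDerivAt_comp_mk_left.deriv

theorem pdSnd_eq_fderiv (hf : DifferentiableAt ℝ f (x, y)) :
    pdSnd f x y = fderiv ℝ f (x, y) (0, 1) :=
  hf.hasFDerivAt.hasDerivAt_comp_mk_right.deriv

theorem pdFst_eq_zero_of_eqOn {s : Set ℝ} (hf : DifferentiableAt ℝ f (x, y))
    (hs : UniqueDiffWithinAt ℝ s x) (hx : x ∈ s) (h0 : ∀ t ∈ s, f (t, y) = 0) :
    pdFst f x y = 0 := by
  have hslice : HasDerivWithinAt (fun a => f (a, y)) (pdFst f x y) s x := by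
    rw [pdFst_eq_fderiv hf]
    exact hf.hasFDerivAt.hasDerivAt_comp_mk_left.hasDerivWithinAt
  exact hs.eq_deriv s hslice ((hasDerivWithinAt_const x s 0).congr h0 (h0 x hx))

theorem continuousOn_pdFst (hU : IsOpen U) (hf : ContDiffOn ℝ 1 f U) :
    ContinuousOn (fun p => pdFst f p.1 p.2) U :=
  ((hf.continuousOn_fderiv_of_isOpen hU le_rfl).clm_apply continuousOn_const).congr fun _ hp =>
    pdFst_eq_fderiv ((hf.contDiffAt (hU.mem_nhds hp)).differentiableAt one_ne_zero)

theorem continuousOn_pdSnd (hU : IsOpen U) (hf : ContDiffOn ℝ 1 f U) :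
    ContinuousOn (fun p => pdSnd f p.1 p.2) U :=
  ((hf.continuousOn_fderiv_of_isOpen hU le_rfl).clm_apply continuousOn_const).congr fun _ hp =>
    pdSnd_eq_fderiv ((hf.contDiffAt (hU.mem_nhds hp)).differentiableAt one_ne_zero)

theorem hasFDerivAt_fderiv_apply (hU : IsOpen U) (hf : ContDiffOn ℝ 2 f U) {p : ℝ × ℝ}
    (hp : p ∈ U) (v : ℝ × ℝ) :
    HasFDerivAt (fun q => fderiv ℝ f q v)
      ((ContinuousLinearMap.apply ℝ ℝ v).comp (fderiv ℝ (fderiv ℝ f) p)) p :=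
  (ContinuousLinearMap.apply ℝ ℝ v).hasFDerivAt.comp p
    (((hf.fderiv_of_isOpen hU (by norm_num)).contDiffAt (hU.mem_nhds hp)).differentiableAt
      one_ne_zero).hasFDerivAt

theorem copDens_eq_fderiv_fderiv (hU : IsOpen U) (hf : ContDiffOn ℝ 2 f U)
    (hp : (x, y) ∈ U) : copDens f x y = fderiv ℝ (fderiv ℝ f) (x, y) (1, 0) (0, 1) := by
  have hslice : (fun a => pdSnd f a y) =ᶠ[𝓝 x] fun a => fderiv ℝ f (a, y) (0, 1) := by
    filter_upwards [(continuous_id.prodMk continuous_const).continuousAt.preimage_mem_nhds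
      (hU.mem_nhds hp)] with a ha
    exact pdSnd_eq_fderiv ((hf.contDiffAt (hU.mem_nhds ha)).differentiableAt two_ne_zero)
  exact hslice.deriv_eq.trans
    (hasFDerivAt_fderiv_apply hU hf hp _).hasDerivAt_comp_mk_left.deriv

theorem continuousOn_copDens (hU : IsOpen U) (hf : ContDiffOn ℝ 2 f U) :
    ContinuousOn (fun p => copDens f p.1 p.2) U :=
  ((((hf.fderiv_of_isOpen hU (by norm_num)).continuousOn_fderiv_of_isOpen hU le_rfl).clm_apply
    continuousOn_const).clm_apply continuousOn_const).congr fun _ hp =>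
      copDens_eq_fderiv_fderiv hU hf hp

theorem hasDerivAt_pdFst_right (hU : IsOpen U) (hf : ContDiffOn ℝ 2 f U) (hp : (x, y) ∈ U) :
    HasDerivAt (fun b => pdFst f x b) (copDens f x y) y := by
  have hslice : (fun b => pdFst f x b) =ᶠ[𝓝 y] fun b => fderiv ℝ f (x, b) (1, 0) := by
    filter_upwards [(continuous_const.prodMk continuous_id).continuousAt.preimage_mem_nhds
      (hU.mem_nhds hp)] with b hb
    exact pdFst_eq_fderiv ((hf.contDiffAt (hU.mem_nhds hb)).differentiableAt two_ne_zero)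
  have hsymm := (hf.contDiffAt (hU.mem_nhds hp)).isSymmSndFDerivAt (by simp) (0, 1) (1, 0)
  rw [copDens_eq_fderiv_fderiv hU hf hp, ← hsymm]
  exact (hasFDerivAt_fderiv_apply hU hf hp _).hasDerivAt_comp_mk_right.congr_of_eventuallyEq
    hslice

end PartialDerivatives

section Vine

-- Note that `cond12 C = pdSnd C` and `cond32 C v y = pdFst C y v` hold definitionally.

def vineDensity (C12 C23 C132 : ℝ × ℝ → ℝ) (v1 v2 v3 : ℝ) : ℝ :=
  copDens C12 v1 v2 * copDens C23 v2 v3 * copDens C132 (cond12 C12 v1 v2) (cond32 C23 v3 v2)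

theorem vine_eq_integral_vineDensity (C12 C23 C132 : ℝ × ℝ → ℝ) (u1 u2 u3 : ℝ) :
    vine C12 C23 C132 u1 u2 u3 =
      ∫ v1 in 0..u1, ∫ v2 in 0..u2, ∫ v3 in 0..u3, vineDensity C12 C23 C132 v1 v2 v3 :=
  rfl

variable {C12 C23 C132 : ℝ × ℝ → ℝ} {U : Set (ℝ × ℝ)}

theorem continuousOn_vineDensity (hU : IsOpen U) (hsq : Icc 0 1 ×ˢ Icc 0 1 ⊆ U)
    (h12 : ContDiffOn ℝ 2 C12 U) (h23 : ContDiffOn ℝ 2 C23 U) (h132 : ContDiffOn ℝ 2 C132 U)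
    (hr12 : ∀ u1 ∈ Icc (0:ℝ) 1, ∀ u2 ∈ Icc (0:ℝ) 1, cond12 C12 u1 u2 ∈ Icc (0:ℝ) 1)
    (hr32 : ∀ u3 ∈ Icc (0:ℝ) 1, ∀ u2 ∈ Icc (0:ℝ) 1, cond32 C23 u3 u2 ∈ Icc (0:ℝ) 1) :
    ContinuousOn (fun q : (ℝ × ℝ) × ℝ => vineDensity C12 C23 C132 q.1.1 q.1.2 q.2)
      ((Icc 0 1 ×ˢ Icc 0 1) ×ˢ Icc 0 1) := by
  have h23pair : ContinuousOn (fun q : (ℝ × ℝ) × ℝ => (q.1.2, q.2))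
      ((Icc 0 1 ×ˢ Icc 0 1) ×ˢ Icc 0 1) := by fun_prop
  have hcond : ContinuousOn
      (fun q : (ℝ × ℝ) × ℝ => (cond12 C12 q.1.1 q.1.2, cond32 C23 q.2 q.1.2))
      ((Icc 0 1 ×ˢ Icc 0 1) ×ˢ Icc 0 1) :=
    ((continuousOn_pdSnd hU (h12.of_le (by norm_num))).comp continuousOn_fst
      fun q hq => hsq hq.1).prodMk
    ((continuousOn_pdFst hU (h23.of_le (by norm_num))).comp h23pair
      fun q hq => hsq ⟨hq.1.2, hq.2⟩)
  refine (((continuousOn_copDens hU h12).comp continuousOn_fst fun q hq => hsq hq.1).mul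
    ((continuousOn_copDens hU h23).comp h23pair fun q hq => hsq ⟨hq.1.2, hq.2⟩)).mul
    ((continuousOn_copDens hU h132).comp hcond fun q hq => hsq ?_)
  exact ⟨hr12 _ hq.1.1 _ hq.1.2, hr32 _ hq.2 _ hq.1.2⟩

theorem intervalIntegral_copDens_mul_copDens_cond32_eq_pdFst (hU : IsOpen U)
    (hsq : Icc 0 1 ×ˢ Icc 0 1 ⊆ U) (h23 : ContDiffOn ℝ 2 C23 U) (h132 : ContDiffOn ℝ 2 C132 U)
    (hb23 : ∀ t ∈ Icc (0:ℝ) 1, C23 (t, 0) = 0) (hb132 : ∀ t ∈ Icc (0:ℝ) 1, C132 (t, 0) = 0)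
    {x y u : ℝ} (hx : x ∈ Icc (0:ℝ) 1) (hy : y ∈ Icc (0:ℝ) 1) (hu : u ∈ Icc (0:ℝ) 1)
    (hr32 : ∀ v ∈ Icc (0:ℝ) 1, cond32 C23 v y ∈ Icc (0:ℝ) 1) :
    ∫ v in 0..u, copDens C23 y v * copDens C132 x (cond32 C23 v y) =
      pdFst C132 x (cond32 C23 u y) := by
  have hsub : uIcc 0 u ⊆ Icc 0 1 := uIcc_subset_Icc (left_mem_Icc.2 zero_le_one) hu
  have hderiv : ∀ v ∈ uIcc 0 u, HasDerivAt (fun v => pdFst C132 x (cond32 C23 v y))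
      (copDens C23 y v * copDens C132 x (cond32 C23 v y)) v := fun v hv => by
    rw [mul_comm]
    exact (hasDerivAt_pdFst_right hU h132 (hsq ⟨hx, hr32 v (hsub hv)⟩)).comp v
      (hasDerivAt_pdFst_right hU h23 (hsq ⟨hy, hsub hv⟩))
  have hline : Continuous fun v : ℝ => (y, v) := by fun_prop
  have hcond : ContinuousOn (fun v => cond32 C23 v y) (uIcc 0 u) :=
    (continuousOn_pdFst hU (h23.of_le (by norm_num))).comp hline.continuousOn
      fun v hv => hsq ⟨hy, hsub hv⟩
  have hcont : ContinuousOn (fun v => copDens C23 y v * copDens C132 x (cond32 C23 v y))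
      (uIcc 0 u) :=
    ((continuousOn_copDens hU h23).comp hline.continuousOn fun v hv => hsq ⟨hy, hsub hv⟩).mul
      ((continuousOn_copDens hU h132).comp (continuousOn_const.prodMk hcond)
        fun v hv => hsq ⟨hx, hr32 v (hsub hv)⟩)
  have hzero : ∀ {g : ℝ × ℝ → ℝ} {s : ℝ}, ContDiffOn ℝ 2 g U → s ∈ Icc (0:ℝ) 1 →
      (∀ t ∈ Icc (0:ℝ) 1, g (t, 0) = 0) → pdFst g s 0 = 0 := fun hg hs hb =>
    pdFst_eq_zero_of_eqOn ((hg.differentiableOn two_ne_zero).differentiableAt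
      (hU.mem_nhds (hsq ⟨hs, left_mem_Icc.2 zero_le_one⟩)))
      (uniqueDiffOn_Icc_zero_one _ hs) hs hb
  rw [integral_eq_sub_of_hasDerivAt hderiv hcont.intervalIntegrable]
  change _ - pdFst C132 x (pdFst C23 y 0) = _
  rw [hzero h23 hy hb23, hzero h132 hx hb132, sub_zero]

end Vine

theorem vine_partial_u1_u2_general
    (C12 C23 C132 : ℝ × ℝ → ℝ)
    (U : Set (ℝ × ℝ)) (hU : IsOpen U)
    (hUsub : Set.Icc ((0 : ℝ), (0 : ℝ)) (1, 1) ⊆ U)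
    (h12 : ContDiffOn ℝ 2 C12 U) (h23 : ContDiffOn ℝ 2 C23 U)
    (h132 : ContDiffOn ℝ 2 C132 U)
    (hb23 : ∀ t ∈ Set.Icc (0:ℝ) 1, C23 (0, t) = 0 ∧ C23 (t, 0) = 0)
    (hb132 : ∀ t ∈ Set.Icc (0:ℝ) 1, C132 (0, t) = 0 ∧ C132 (t, 0) = 0)
    (hr12 : ∀ u1 ∈ Set.Icc (0:ℝ) 1, ∀ u2 ∈ Set.Icc (0:ℝ) 1,
      cond12 C12 u1 u2 ∈ Set.Icc (0:ℝ) 1)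
    (hr32 : ∀ u3 ∈ Set.Icc (0:ℝ) 1, ∀ u2 ∈ Set.Icc (0:ℝ) 1,
      cond32 C23 u3 u2 ∈ Set.Icc (0:ℝ) 1)
    (u1 u2 u3 : ℝ) (hu1 : u1 ∈ Set.Ioo (0:ℝ) 1) (hu2 : u2 ∈ Set.Ioo (0:ℝ) 1)
    (hu3 : u3 ∈ Set.Icc (0:ℝ) 1) :
    deriv (fun a => deriv (fun b => vine C12 C23 C132 a b u3) u2) u1 =
      pdFst C132 (cond12 C12 u1 u2) (cond32 C23 u3 u2) * copDens C12 u1 u2 := by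
  have hsq : Icc (0:ℝ) 1 ×ˢ Icc (0:ℝ) 1 ⊆ U := fun p hp =>
    hUsub ⟨⟨hp.1.1, hp.2.1⟩, ⟨hp.1.2, hp.2.2⟩⟩
  have hu2' : u2 ∈ Icc (0:ℝ) 1 := Ioo_subset_Icc_self hu2
  have hmarginal : ContinuousOn
      (uncurry fun v1 v2 => ∫ v3 in 0..u3, vineDensity C12 C23 C132 v1 v2 v3)
      (Icc 0 1 ×ˢ Icc 0 1) :=
    continuousOn_intervalIntegral_of_continuousOn
      ((continuousOn_vineDensity hU hsq h12 h23 h132 hr12 hr32).mono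
        (prod_mono_right (uIcc_subset_Icc (left_mem_Icc.2 zero_le_one) hu3)))
  simp_rw [vine_eq_integral_vineDensity]
  rw [deriv_deriv_intervalIntegral_intervalIntegral_of_continuousOn hmarginal hu1 hu2]
  simp only [vineDensity, mul_assoc]
  rw [intervalIntegral.integral_const_mul,
    intervalIntegral_copDens_mul_copDens_cond32_eq_pdFst hU hsq h23 h132
      (fun t ht => (hb23 t ht).2) (fun t ht => (hb132 t ht).2)
      (hr12 u1 (Ioo_subset_Icc_self hu1) u2 hu2') hu2' hu3 (fun v hv => hr32 v hv u2 hu2'),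
    mul_comm]

/-- ∂²C(u₁,u₂,u₃)/∂u₁∂u₂ = ∂₁C₁₃;₂(C_{1|2}(u₁|u₂), C_{3|2}(u₃|u₂)) ⬝ c₁₂(u₁,u₂). -/
theorem vine_partial_u1_u2
    (C12 C23 C132 : ℝ × ℝ → ℝ)
    (U : Set (ℝ × ℝ)) (hU : IsOpen U)
    (hUsub : Set.Icc ((0 : ℝ), (0 : ℝ)) (1, 1) ⊆ U)
    (h12 : ContDiffOn ℝ 2 C12 U) (h23 : ContDiffOn ℝ 2 C23 U)
    (h132 : ContDiffOn ℝ 2 C132 U)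
    (hb12 : ∀ t ∈ Set.Icc (0:ℝ) 1, C12 (0, t) = 0 ∧ C12 (t, 0) = 0)
    (hb23 : ∀ t ∈ Set.Icc (0:ℝ) 1, C23 (0, t) = 0 ∧ C23 (t, 0) = 0)
    (hb132 : ∀ t ∈ Set.Icc (0:ℝ) 1, C132 (0, t) = 0 ∧ C132 (t, 0) = 0)
    (hr12 : ∀ u1 ∈ Set.Icc (0:ℝ) 1, ∀ u2 ∈ Set.Icc (0:ℝ) 1,
      cond12 C12 u1 u2 ∈ Set.Icc (0:ℝ) 1)
    (hr32 : ∀ u3 ∈ Set.Icc (0:ℝ) 1, ∀ u2 ∈ Set.Icc (0:ℝ) 1,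
      cond32 C23 u3 u2 ∈ Set.Icc (0:ℝ) 1)
    (u1 u2 u3 : ℝ) (hu1 : u1 ∈ Set.Ioo (0:ℝ) 1) (hu2 : u2 ∈ Set.Ioo (0:ℝ) 1)
    (hu3 : u3 ∈ Set.Icc (0:ℝ) 1) :
    deriv (fun a => deriv (fun b => vine C12 C23 C132 a b u3) u2) u1 =
      pdFst C132 (cond12 C12 u1 u2) (cond32 C23 u3 u2) * copDens C12 u1 u2 :=
  vine_partial_u1_u2_general C12 C23 C132 U hU hUsub h12 h23 h132 hb23 hb132 hr12 hr32 u1 u2 u3 hu1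
    hu2 hu3

end
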